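/- (Del Pezzo case of the paper's lemma on triples of families with mutual intersection one.) Let r be an integer with 4 ≤ r ≤ 8. If u, v, w ∈ F_r = {c ∈ L_r : ⟨k_r,c⟩ = −2 and ⟨c,c⟩ = 0} satisfy ⟨u,v⟩ = ⟨v,w⟩ = ⟨u,w⟩ = 1, then there exists a (−1)-class c ∈ E_r = {c ∈ L_r : ⟨k_r,c⟩ = −1 and ⟨c,c⟩ = −1} with ⟨u,c⟩ = ⟨v,c⟩ = ⟨w,c⟩ = 0. -/

import Mathlib

/-- The intersection form on the Neron-Severi lattice `L_r = ℤ^(r+1)` of a weak del Pezzo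
surface of degree `9 - r` in a type 1 basis: `⟨v,w⟩ = v₀w₀ - v₁w₁ - ⋯ - vᵣwᵣ`. -/
def nsForm (r : ℕ) (v w : Fin (r + 1) → ℤ) : ℤ :=
  v 0 * w 0 - ∑ i : Fin r, v i.succ * w i.succ

/-- The canonical class `k_r = -3e₀ + e₁ + ⋯ + e_r`. -/
def canK (r : ℕ) : Fin (r + 1) → ℤ := fun i => if i = 0 then -3 else 1

/-- The standard basis vector `e_j` of `L_r`. -/
def eVec (r : ℕ) (j : Fin (r + 1)) : Fin (r + 1) → ℤ := fun i => if i = j then 1 else 0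

/-- The set of (-2)-classes `R_r = {c : ⟨k_r,c⟩ = 0, ⟨c,c⟩ = -2}`. -/
def Rset (r : ℕ) : Set (Fin (r + 1) → ℤ) :=
  {c | nsForm r (canK r) c = 0 ∧ nsForm r c c = -2}

/-- The set of (-1)-classes `E_r = {c : ⟨k_r,c⟩ = -1, ⟨c,c⟩ = -1}`. -/
def Eset (r : ℕ) : Set (Fin (r + 1) → ℤ) :=
  {c | nsForm r (canK r) c = -1 ∧ nsForm r c c = -1}

/-- The set of minimal-family classes `F_r = {c : ⟨k_r,c⟩ = -2, ⟨c,c⟩ = 0}`. -/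
def Fset (r : ℕ) : Set (Fin (r + 1) → ℤ) :=
  {c | nsForm r (canK r) c = -2 ∧ nsForm r c c = 0}

/-!
The reflection `s_α(x) = x + ⟨x,α⟩α` in a root `α` (`⟨k,α⟩ = 0`, `⟨α,α⟩ = -2`) is an isometry
fixing `k`, so it permutes `F_r` and `E_r`; for `α = e₀ - eᵢ - eⱼ - eₗ` it is the Cremona
transformation, changing the degree `x₀` into `x₀ + ⟨x,α⟩`.

For `r ≤ 8`, Cauchy–Schwarz shows that classes in `F_r` have coordinates `xᵢ ≤ 0` (`i ≥ 1`).
Put `D = u + v + w` and `t = D₀`; then `∑ Dᵢ = 6 - 3t` and `∑ Dᵢ² = t² - 6`. If some `Dₘ`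
vanishes, then `uₘ = vₘ = wₘ = 0` and `eₘ` is the required `(-1)`-class. Otherwise
`6 - 3t ≤ -r ≤ -4`, so `t ≥ 4`, and a Noether-type inequality on the three most negative `Dᵢ`
gives `t + Dᵢ + Dⱼ + Dₗ < 0`: the Cremona transformation in `e₀ - eᵢ - eⱼ - eₗ` strictly lowers
`t`, and the `(-1)`-class obtained by induction is carried back by the same reflection.
-/

open Finset

section Form

variable {r : ℕ}

lemma nsForm_comm (x y : Fin (r + 1) → ℤ) : nsForm r x y = nsForm r y x := by
  simp only [nsForm, mul_comm]

lemma nsForm_add_left (x y z : Fin (r + 1) → ℤ) :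
    nsForm r (x + y) z = nsForm r x z + nsForm r y z := by
  simp only [nsForm, Pi.add_apply, add_mul, sum_add_distrib]
  ring

lemma nsForm_sub_left (x y z : Fin (r + 1) → ℤ) :
    nsForm r (x - y) z = nsForm r x z - nsForm r y z := by
  simp only [nsForm, Pi.sub_apply, sub_mul, sum_sub_distrib]
  ring

lemma nsForm_smul_left (a : ℤ) (x z : Fin (r + 1) → ℤ) :
    nsForm r (a • x) z = a * nsForm r x z := by
  simp only [nsForm, Pi.smul_apply, smul_eq_mul, mul_assoc, ← mul_sum]
  ring

lemma nsForm_add_right (x y z : Fin (r + 1) → ℤ) :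
    nsForm r z (x + y) = nsForm r z x + nsForm r z y := by
  simp only [nsForm_comm z, nsForm_add_left]

lemma nsForm_sub_right (x y z : Fin (r + 1) → ℤ) :
    nsForm r z (x - y) = nsForm r z x - nsForm r z y := by
  simp only [nsForm_comm z, nsForm_sub_left]

lemma nsForm_smul_right (a : ℤ) (x z : Fin (r + 1) → ℤ) :
    nsForm r z (a • x) = a * nsForm r z x := by
  simp only [nsForm_comm z, nsForm_smul_left]

lemma nsForm_canK (x : Fin (r + 1) → ℤ) :
    nsForm r (canK r) x = -3 * x 0 - ∑ i : Fin r, x i.succ := by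
  simp [nsForm, canK, Fin.succ_ne_zero]

lemma nsForm_self (x : Fin (r + 1) → ℤ) :
    nsForm r x x = x 0 ^ 2 - ∑ i : Fin r, x i.succ ^ 2 := by
  simp only [nsForm, sq]

lemma nsForm_eVec_zero (x : Fin (r + 1) → ℤ) : nsForm r x (eVec r 0) = x 0 := by
  simp [nsForm, eVec, Fin.succ_ne_zero]

lemma nsForm_eVec_succ (x : Fin (r + 1) → ℤ) (m : Fin r) :
    nsForm r x (eVec r m.succ) = -x m.succ := by
  simp [nsForm, eVec, (Fin.succ_ne_zero m).symm]

lemma eVec_succ_mem_Eset (m : Fin r) : eVec r m.succ ∈ Eset r := by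
  refine ⟨?_, ?_⟩ <;> rw [nsForm_eVec_succ] <;> simp [canK, eVec, Fin.succ_ne_zero]

end Form

def reflect (r : ℕ) (α x : Fin (r + 1) → ℤ) : Fin (r + 1) → ℤ := x + nsForm r x α • α

section Reflection

variable {r : ℕ} {α : Fin (r + 1) → ℤ}

lemma nsForm_reflect_left (x y : Fin (r + 1) → ℤ) :
    nsForm r (reflect r α x) y = nsForm r x (reflect r α y) := by
  simp only [reflect, nsForm_add_left, nsForm_add_right, nsForm_smul_left, nsForm_smul_right,
    nsForm_comm α y]
  ring

lemma nsForm_reflect_right_of_orthogonal {z : Fin (r + 1) → ℤ} (hz : nsForm r z α = 0)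
    (x : Fin (r + 1) → ℤ) : nsForm r z (reflect r α x) = nsForm r z x := by
  simp only [reflect, nsForm_add_right, nsForm_smul_right, hz, mul_zero, add_zero]

lemma nsForm_reflect_reflect (hα : nsForm r α α = -2) (x y : Fin (r + 1) → ℤ) :
    nsForm r (reflect r α x) (reflect r α y) = nsForm r x y := by
  simp only [reflect, nsForm_add_left, nsForm_add_right, nsForm_smul_left, nsForm_smul_right,
    nsForm_comm α y, hα]
  ring

lemma reflect_mem_Fset (hα : α ∈ Rset r) {x : Fin (r + 1) → ℤ} (hx : x ∈ Fset r) :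
    reflect r α x ∈ Fset r :=
  ⟨(nsForm_reflect_right_of_orthogonal hα.1 x).trans hx.1,
    (nsForm_reflect_reflect hα.2 x x).trans hx.2⟩

lemma reflect_mem_Eset (hα : α ∈ Rset r) {x : Fin (r + 1) → ℤ} (hx : x ∈ Eset r) :
    reflect r α x ∈ Eset r :=
  ⟨(nsForm_reflect_right_of_orthogonal hα.1 x).trans hx.1,
    (nsForm_reflect_reflect hα.2 x x).trans hx.2⟩

end Reflection

/-- `e₀ - eᵢ - eⱼ - eₗ`, where `eᵢ` stands for `eVec r i.succ`. -/
def cremonaRoot (r : ℕ) (i j l : Fin r) : Fin (r + 1) → ℤ :=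
  eVec r 0 - eVec r i.succ - eVec r j.succ - eVec r l.succ

section Cremona

variable {r : ℕ} {i j l : Fin r}

lemma nsForm_cremonaRoot (x : Fin (r + 1) → ℤ) :
    nsForm r x (cremonaRoot r i j l) = x 0 + x i.succ + x j.succ + x l.succ := by
  simp only [cremonaRoot, nsForm_sub_right, nsForm_eVec_zero, nsForm_eVec_succ]
  ring

lemma cremonaRoot_mem_Rset (hij : i ≠ j) (hil : i ≠ l) (hjl : j ≠ l) :
    cremonaRoot r i j l ∈ Rset r := by
  refine ⟨?_, ?_⟩ <;> rw [nsForm_cremonaRoot] <;>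
    simp [cremonaRoot, eVec, canK, fun k : Fin r => (Fin.succ_ne_zero k).symm, hij, hil, hjl,
      hij.symm, hil.symm, hjl.symm]

lemma reflect_cremonaRoot_apply_zero (x : Fin (r + 1) → ℤ) :
    reflect r (cremonaRoot r i j l) x 0 = x 0 + nsForm r x (cremonaRoot r i j l) := by
  simp [reflect, cremonaRoot, eVec, fun k : Fin r => (Fin.succ_ne_zero k).symm]

end Cremona

lemma nonpos_of_sum_eq_of_sum_sq_eq {n : ℕ} (hn : n ≤ 8) {y : Fin n → ℤ} {d : ℤ}
    (hsum : ∑ i, y i = 2 - 3 * d) (hsq : ∑ i, y i ^ 2 = d ^ 2) (b : Fin n) : y b ≤ 0 := by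
  cases n with
  | zero => exact b.elim0
  | succ k =>
    rw [Fin.sum_univ_succAbove _ b] at hsum hsq
    have cauchy_schwarz : (∑ i, y (b.succAbove i)) ^ 2 ≤ k * ∑ i, y (b.succAbove i) ^ 2 := by
      simpa using sq_sum_le_card_mul_sum_sq (s := univ) (f := fun i => y (b.succAbove i))
    have hk : (k : ℤ) ≤ 7 := by omega
    have hrest : (2 - 3 * d - y b) ^ 2 ≤ 7 * (d ^ 2 - y b ^ 2) := by
      rw [show 2 - 3 * d - y b = ∑ i, y (b.succAbove i) by linarith,
        show d ^ 2 - y b ^ 2 = ∑ i, y (b.succAbove i) ^ 2 by linarith]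
      exact cauchy_schwarz.trans
        (mul_le_mul_of_nonneg_right hk (sum_nonneg fun i _ => sq_nonneg _))
    by_contra! hb
    nlinarith [sq_nonneg (2 * d + 3 * y b - 6)]

/-- The hypotheses hold for the three smallest entries `a ≤ b ≤ c ≤ 0` of a vector with at most
eight entries, `R` and `Q` being the sum and the sum of squares of the others. -/
lemma add_three_smallest_neg {a b c R Q t : ℤ} (ht : 4 ≤ t) (hab : a ≤ b) (hbc : b ≤ c)
    (hc : c ≤ 0) (hQ : Q ≤ c * R) (hR : 5 * c ≤ R)
    (hsum : a + b + c + R = 6 - 3 * t) (hsq : a ^ 2 + b ^ 2 + c ^ 2 + Q = t ^ 2 - 6) :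
    t + a + b + c < 0 := by
  by_contra! h
  rcases hc.eq_or_lt with rfl | hc
  · nlinarith
  · have key : -2 * c * t ≤ 6 * c ^ 2 + 6 * c + 6 := by
      nlinarith [mul_nonneg (sub_nonneg.2 (hab.trans hbc)) (sub_nonneg.2 hbc),
        mul_nonneg h (by linarith : (0 : ℤ) ≤ t - a - b + 4 * c)]
    nlinarith [mul_nonneg (by linarith : (0 : ℤ) ≤ -c) (by linarith : (0 : ℤ) ≤ t + 3 * c)]

lemma exists_three_add_neg {r : ℕ} (h3 : 3 ≤ r) (h8 : r ≤ 8) {y : Fin r → ℤ} {t : ℤ}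
    (ht : 4 ≤ t) (hy : ∀ i, y i ≤ 0) (hsum : ∑ i, y i = 6 - 3 * t)
    (hsq : ∑ i, y i ^ 2 = t ^ 2 - 6) :
    ∃ i j l : Fin r, i ≠ j ∧ i ≠ l ∧ j ≠ l ∧ t + y i + y j + y l < 0 := by
  have : Nonempty (Fin r) := ⟨⟨0, by omega⟩⟩
  obtain ⟨i, -, hi⟩ := exists_min_image univ y univ_nonempty
  obtain ⟨j, hj, hjmin⟩ := exists_min_image (univ.erase i) y <| card_pos.1 <| by
    rw [card_erase_of_mem (mem_univ i), card_univ, Fintype.card_fin]; omega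
  obtain ⟨l, hl, hlmin⟩ := exists_min_image ((univ.erase i).erase j) y <| card_pos.1 <| by
    rw [card_erase_of_mem hj, card_erase_of_mem (mem_univ i), card_univ, Fintype.card_fin]
    omega
  set S := ((univ.erase i).erase j).erase l
  have hsplit (f : Fin r → ℤ) : ∑ m, f m = f i + f j + f l + ∑ m ∈ S, f m := by
    rw [← add_sum_erase _ _ (mem_univ i), ← add_sum_erase _ _ hj, ← add_sum_erase _ _ hl]
    ring
  have hS : ∀ m ∈ S, y l ≤ y m := fun m hm => hlmin m (mem_of_mem_erase hm)
  have hcard : (#S : ℤ) ≤ 5 := by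
    rw [card_erase_of_mem hl, card_erase_of_mem hj, card_erase_of_mem (mem_univ i), card_univ,
      Fintype.card_fin]
    omega
  have hsq_rest : ∑ m ∈ S, y m ^ 2 ≤ y l * ∑ m ∈ S, y m := by
    rw [mul_sum]
    exact sum_le_sum fun m hm => by nlinarith [hS m hm, hy m]
  have hsum_rest : 5 * y l ≤ ∑ m ∈ S, y m :=
    calc 5 * y l ≤ #S * y l := mul_le_mul_of_nonpos_right hcard (hy l)
      _ = #S • y l := (nsmul_eq_mul _ _).symm
      _ ≤ ∑ m ∈ S, y m := card_nsmul_le_sum S y (y l) hS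
  refine ⟨i, j, l, (ne_of_mem_erase hj).symm, ?_, (ne_of_mem_erase hl).symm,
    add_three_smallest_neg ht (hi j (mem_univ _)) (hjmin l (mem_of_mem_erase hl)) (hy l)
      hsq_rest hsum_rest (by rw [← hsplit]; exact hsum) (by rw [← hsplit (y · ^ 2)]; exact hsq)⟩
  exact fun h => (ne_of_mem_erase (mem_of_mem_erase hl)) h.symm

section Fset

variable {r : ℕ} {x : Fin (r + 1) → ℤ}

lemma sum_coord_of_mem_Fset (hx : x ∈ Fset r) : ∑ i : Fin r, x i.succ = 2 - 3 * x 0 := by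
  have := hx.1
  rw [nsForm_canK] at this
  linarith

lemma sum_coord_sq_of_mem_Fset (hx : x ∈ Fset r) : ∑ i : Fin r, x i.succ ^ 2 = x 0 ^ 2 := by
  have := hx.2
  rw [nsForm_self] at this
  linarith

lemma coord_nonpos_of_mem_Fset (h8 : r ≤ 8) (hx : x ∈ Fset r) (b : Fin r) : x b.succ ≤ 0 :=
  nonpos_of_sum_eq_of_sum_sq_eq h8 (sum_coord_of_mem_Fset hx) (sum_coord_sq_of_mem_Fset hx) b

lemma degree_pos_of_mem_Fset (h8 : r ≤ 8) (hx : x ∈ Fset r) : 0 < x 0 := by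
  have := sum_nonpos fun b (_ : b ∈ univ) => coord_nonpos_of_mem_Fset h8 hx b
  rw [sum_coord_of_mem_Fset hx] at this
  omega

end Fset

def IsUnitTriple (r : ℕ) (u v w : Fin (r + 1) → ℤ) : Prop :=
  u ∈ Fset r ∧ v ∈ Fset r ∧ w ∈ Fset r ∧
    nsForm r u v = 1 ∧ nsForm r v w = 1 ∧ nsForm r u w = 1

def HasOrthogonalExceptional (r : ℕ) (u v w : Fin (r + 1) → ℤ) : Prop :=
  ∃ c ∈ Eset r, nsForm r u c = 0 ∧ nsForm r v c = 0 ∧ nsForm r w c = 0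

section Triple

variable {r : ℕ} {u v w α : Fin (r + 1) → ℤ}

lemma IsUnitTriple.map_reflect (h : IsUnitTriple r u v w) (hα : α ∈ Rset r) :
    IsUnitTriple r (reflect r α u) (reflect r α v) (reflect r α w) := by
  obtain ⟨hu, hv, hw, huv, hvw, huw⟩ := h
  exact ⟨reflect_mem_Fset hα hu, reflect_mem_Fset hα hv, reflect_mem_Fset hα hw,
    (nsForm_reflect_reflect hα.2 u v).trans huv, (nsForm_reflect_reflect hα.2 v w).trans hvw,
    (nsForm_reflect_reflect hα.2 u w).trans huw⟩

lemma HasOrthogonalExceptional.of_reflect (hα : α ∈ Rset r)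
    (h : HasOrthogonalExceptional r (reflect r α u) (reflect r α v) (reflect r α w)) :
    HasOrthogonalExceptional r u v w := by
  obtain ⟨c, hc, hu, hv, hw⟩ := h
  refine ⟨reflect r α c, reflect_mem_Eset hα hc, ?_, ?_, ?_⟩ <;>
    rwa [← nsForm_reflect_left]

lemma IsUnitTriple.sum_coord (h : IsUnitTriple r u v w) :
    ∑ i : Fin r, (u + v + w) i.succ = 6 - 3 * (u + v + w) 0 := by
  have hK : nsForm r (canK r) (u + v + w) = -6 := by
    rw [nsForm_add_right, nsForm_add_right, h.1.1, h.2.1.1, h.2.2.1.1]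
    norm_num
  rw [nsForm_canK] at hK
  linarith

lemma IsUnitTriple.sum_coord_sq (h : IsUnitTriple r u v w) :
    ∑ i : Fin r, (u + v + w) i.succ ^ 2 = (u + v + w) 0 ^ 2 - 6 := by
  obtain ⟨hu, hv, hw, huv, hvw, huw⟩ := h
  have hD : nsForm r (u + v + w) (u + v + w) = 6 := by
    simp only [nsForm_add_left, nsForm_add_right, nsForm_comm v u, nsForm_comm w u,
      nsForm_comm w v, hu.2, hv.2, hw.2, huv, hvw, huw]
    norm_num
  rw [nsForm_self] at hD
  linarith

lemma IsUnitTriple.coord_nonpos (h8 : r ≤ 8) (h : IsUnitTriple r u v w) (m : Fin r) :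
    (u + v + w) m.succ ≤ 0 := by
  have := coord_nonpos_of_mem_Fset h8 h.1 m
  have := coord_nonpos_of_mem_Fset h8 h.2.1 m
  have := coord_nonpos_of_mem_Fset h8 h.2.2.1 m
  simp only [Pi.add_apply]
  omega

lemma IsUnitTriple.degree_pos (h8 : r ≤ 8) (h : IsUnitTriple r u v w) : 0 < (u + v + w) 0 := by
  have := degree_pos_of_mem_Fset h8 h.1
  have := degree_pos_of_mem_Fset h8 h.2.1
  have := degree_pos_of_mem_Fset h8 h.2.2.1
  simp only [Pi.add_apply]
  omega

lemma IsUnitTriple.hasOrthogonalExceptional_of_coord_eq_zero (h8 : r ≤ 8)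
    (h : IsUnitTriple r u v w) {m : Fin r} (hm : (u + v + w) m.succ = 0) :
    HasOrthogonalExceptional r u v w := by
  have := coord_nonpos_of_mem_Fset h8 h.1 m
  have := coord_nonpos_of_mem_Fset h8 h.2.1 m
  have := coord_nonpos_of_mem_Fset h8 h.2.2.1 m
  simp only [Pi.add_apply] at hm
  refine ⟨eVec r m.succ, eVec_succ_mem_Eset m, ?_, ?_, ?_⟩ <;> rw [nsForm_eVec_succ] <;> omega

lemma IsUnitTriple.exists_reflect_degree_lt (h4 : 4 ≤ r) (h8 : r ≤ 8)
    (h : IsUnitTriple r u v w) (hD : ∀ m : Fin r, (u + v + w) m.succ ≠ 0) :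
    ∃ α ∈ Rset r,
      (reflect r α u + reflect r α v + reflect r α w) 0 < (u + v + w) 0 := by
  have hy (m : Fin r) : (u + v + w) m.succ ≤ -1 := by
    have := h.coord_nonpos h8 m
    have := hD m
    omega
  have ht : 4 ≤ (u + v + w) 0 := by
    have := sum_le_sum fun m (_ : m ∈ univ) => hy m
    simp only [h.sum_coord, sum_const, card_univ, Fintype.card_fin, smul_neg, nsmul_eq_mul,
      mul_one] at this
    omega
  obtain ⟨i, j, l, hij, hil, hjl, hneg⟩ :=
    exists_three_add_neg (by omega) h8 ht (h.coord_nonpos h8) h.sum_coord h.sum_coord_sq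
  refine ⟨cremonaRoot r i j l, cremonaRoot_mem_Rset hij hil hjl, ?_⟩
  simp only [Pi.add_apply, reflect_cremonaRoot_apply_zero, nsForm_cremonaRoot] at hneg ⊢
  linarith

end Triple

theorem IsUnitTriple.hasOrthogonalExceptional {r : ℕ} (h4 : 4 ≤ r) (h8 : r ≤ 8)
    {u v w : Fin (r + 1) → ℤ} (h : IsUnitTriple r u v w) : HasOrthogonalExceptional r u v w := by
  by_cases hD : ∃ m : Fin r, (u + v + w) m.succ = 0
  · obtain ⟨m, hm⟩ := hD
    exact h.hasOrthogonalExceptional_of_coord_eq_zero h8 hm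
  · simp only [not_exists] at hD
    obtain ⟨α, hα, hlt⟩ := h.exists_reflect_degree_lt h4 h8 hD
    have := (h.map_reflect hα).degree_pos h8
    exact ((h.map_reflect hα).hasOrthogonalExceptional h4 h8).of_reflect hα
termination_by ((u + v + w) 0).toNat
decreasing_by omega

/-- Del Pezzo case of the lemma on triples of families with mutual intersection one:
for 4 ≤ r ≤ 8, if u, v, w ∈ F_r have pairwise intersection product 1, then there is a
(-1)-class orthogonal to all three. -/
theorem stmt_18 (r : ℕ) (h4 : 4 ≤ r) (h8 : r ≤ 8)
    (u v w : Fin (r + 1) → ℤ) (hu : u ∈ Fset r) (hv : v ∈ Fset r) (hw : w ∈ Fset r)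
    (huv : nsForm r u v = 1) (hvw : nsForm r v w = 1) (huw : nsForm r u w = 1) :
    ∃ c ∈ Eset r, nsForm r u c = 0 ∧ nsForm r v c = 0 ∧ nsForm r w c = 0 :=
  IsUnitTriple.hasOrthogonalExceptional h4 h8 ⟨hu, hv, hw, huv, hvw, huw⟩
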